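/- arXiv:2202.07929 — 3 statements merged into one kernel-verified Lean document; each statement's English description precedes it below -/
import Mathlib

section
/- No connected bipartite graph is vertex-critical equimatchable. -/
open SimpleGraph

/-- `M` is a maximal matching of `G` (viewed as a subgraph of `G`): it is a matching and it is
not properly contained in any other matching of `G`. -/
def IsMaximalMatching {V : Type*} (G : SimpleGraph V) (M : G.Subgraph) : Prop :=
  M.IsMatching ∧ ∀ M' : G.Subgraph, M'.IsMatching → M ≤ M' → M' = M

/-- `G` is equimatchable if all maximal matchings of `G` have the same cardinality. -/
def Equimatchable {V : Type*} (G : SimpleGraph V) : Prop :=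
  ∀ M₁ M₂ : G.Subgraph, IsMaximalMatching G M₁ → IsMaximalMatching G M₂ →
    M₁.edgeSet.ncard = M₂.edgeSet.ncard

/-- The matching number ν(G): the maximum cardinality of a matching of `G`. -/
noncomputable def matchNum {V : Type*} (G : SimpleGraph V) : ℕ :=
  sSup {n : ℕ | ∃ M : G.Subgraph, M.IsMatching ∧ M.edgeSet.ncard = n}

/-- `G` is vertex-critical equimatchable (VCE): `G` is equimatchable and deleting any vertex
yields a non-equimatchable graph. -/
def VCE {V : Type*} (G : SimpleGraph V) : Prop :=
  Equimatchable G ∧ ∀ v : V, ¬ Equimatchable (G.induce {u | u ≠ v})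

/-- `G` is edge-critical equimatchable (ECE): `G` is equimatchable and deleting any edge
yields a non-equimatchable graph. -/
def ECE {V : Type*} (G : SimpleGraph V) : Prop :=
  Equimatchable G ∧ ∀ u v : V, G.Adj u v → ¬ Equimatchable (G.deleteEdges {s(u, v)})

/-- `G` is factor-critical: deleting any vertex yields a graph with a perfect matching. -/
def FactorCritical {V : Type*} (G : SimpleGraph V) : Prop :=
  ∀ v : V, ∃ M : (G.induce {u | u ≠ v}).Subgraph, M.IsPerfectMatching

/-- `G` is 2-connected: at least 3 vertices, connected, and deleting any vertex leaves a
connected graph. -/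
def TwoConnected {V : Type*} [Fintype V] (G : SimpleGraph V) : Prop :=
  3 ≤ Fintype.card V ∧ G.Connected ∧ ∀ v : V, (G.induce {u | u ≠ v}).Connected

/-- `G` is bipartite: its vertex set can be partitioned into two parts such that every edge
joins the two parts. -/
def IsBipartiteGraph {V : Type*} (G : SimpleGraph V) : Prop :=
  ∃ s : Set V, ∀ u w : V, G.Adj u w → (u ∈ s ↔ w ∉ s)

/-- `G` is randomly matchable: every matching of `G` extends to a perfect matching. -/
def RandomlyMatchable {V : Type*} (G : SimpleGraph V) : Prop :=
  ∀ M : G.Subgraph, M.IsMatching → ∃ P : G.Subgraph, M ≤ P ∧ P.IsPerfectMatching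


/-!
If every maximal matching of an equimatchable graph `G` covers `v`, then extending a maximal
matching of `G - v` to one of `G` adds exactly the edge at `v`, so `G - v` is again equimatchable.
Hence in a VCE graph every vertex is missed by some maximal matching, and these are maximum.
In a bipartite graph this fails at the ends `u ∈ s`, `w ∉ s` of any edge: moving a maximum matching
that misses `u` along the alternating path from `w` given by a maximum matching that misses `w`
yields a maximum matching missing both, which `uw` would enlarge. A nonempty edgeless graph is
not VCE either, since deleting a vertex leaves it edgeless.
-/

lemma Set.ncard_sdiff_insert_sdiff_lt {α : Type*} [Finite α] {A B : Set α} {e f : α}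
    (heA : e ∈ A) (heB : e ∉ B) (hfA : f ∉ A) : (A \ insert e (B \ {f})).ncard < (A \ B).ncard := by
  refine Set.ncard_lt_ncard ⟨fun x ⟨hxA, hx⟩ => ⟨hxA, fun hxB => hx (Or.inr ⟨hxB, ?_⟩)⟩,
    fun h => (h ⟨heA, heB⟩).2 (Or.inl rfl)⟩ (Set.toFinite _)
  rintro rfl
  exact hfA hxA

namespace SimpleGraph

variable {V : Type*} {G : SimpleGraph V}

namespace Subgraph

variable {M N P : G.Subgraph} {a b c : V}

lemma IsMatching.sup_subgraphOfAdj (hM : M.IsMatching) (ha : a ∉ M.verts) (hb : b ∉ M.verts)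
    (hab : G.Adj a b) : (M ⊔ G.subgraphOfAdj hab).IsMatching := by
  refine hM.sup (.subgraphOfAdj hab) (Set.disjoint_left.mpr fun v hvM hv => ?_)
  have : v = a ∨ v = b := by simpa using (G.subgraphOfAdj hab).support_subset_verts hv
  rcases this with rfl | rfl
  exacts [ha (M.support_subset_verts hvM), hb (M.support_subset_verts hvM)]

lemma IsMatching.adj_of_le (hM : M.IsMatching) (hN : N.IsMatching) (hle : M ≤ N)
    (ha : a ∈ M.verts) (hab : N.Adj a b) : M.Adj a b := by
  obtain ⟨b', hab', -⟩ := hM ha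
  rwa [hN.eq_of_adj_left hab (hle.2 hab')]

lemma deleteVerts_sup_subgraphOfAdj_adj (hbc : G.Adj b c) {u v : V} :
    (P.deleteVerts {a} ⊔ G.subgraphOfAdj hbc).Adj u v ↔
      P.Adj u v ∧ u ≠ a ∧ v ≠ a ∨ (u = b ∧ v = c ∨ u = c ∧ v = b) := by
  simp only [sup_adj, deleteVerts_adj, subgraphOfAdj_adj, Sym2.eq_iff, Set.mem_singleton_iff]
  constructor
  · rintro (⟨-, hu, -, hv, huv⟩ | h) <;> tauto
  · rintro (⟨huv, hu, hv⟩ | h)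
    · exact Or.inl ⟨P.edge_vert huv, hu, P.edge_vert huv.symm, hv, huv⟩
    · tauto

lemma IsMatching.deleteVerts_sup_subgraphOfAdj (hP : P.IsMatching) (hab : P.Adj a b)
    (hc : c ∉ P.verts) (hbc : G.Adj b c) :
    (P.deleteVerts {a} ⊔ G.subgraphOfAdj hbc).IsMatching := by
  intro v hv
  have hv' : v ∈ P.verts ∧ v ≠ a ∨ v = b ∨ v = c := by simpa [or_comm, or_assoc] using hv
  have hcb : c ≠ b := hbc.ne.symm
  simp only [deleteVerts_sup_subgraphOfAdj_adj]
  by_cases hvb : v = b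
  · subst hvb
    refine ⟨c, by tauto, fun t ht => ?_⟩
    rcases ht with ⟨ht, -, hta⟩ | h
    · exact absurd (hP.eq_of_adj_left ht hab.symm) hta
    · tauto
  by_cases hvc : v = c
  · subst hvc
    refine ⟨b, by tauto, fun t ht => ?_⟩
    rcases ht with ⟨ht, -, -⟩ | h
    · exact absurd (P.edge_vert ht) hc
    · tauto
  obtain ⟨hvP, hva⟩ : v ∈ P.verts ∧ v ≠ a := by tauto
  obtain ⟨t, hvt, ht⟩ := hP hvP
  have hta : t ≠ a := fun h => hvb (hP.eq_of_adj_right (h ▸ hvt) hab.symm)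
  refine ⟨t, Or.inl ⟨hvt, hva, hta⟩, fun t' ht' => ?_⟩
  rcases ht' with ⟨ht', -, -⟩ | h
  · exact ht t' ht'
  · tauto

lemma IsMatching.edgeSet_deleteVerts_sup_subgraphOfAdj (hP : P.IsMatching) (hab : P.Adj a b)
    (hbc : G.Adj b c) :
    (P.deleteVerts {a} ⊔ G.subgraphOfAdj hbc).edgeSet = insert s(b, c) (P.edgeSet \ {s(a, b)}) := by
  ext e
  induction e with
  | _ u v =>
    simp only [Subgraph.mem_edgeSet, deleteVerts_sup_subgraphOfAdj_adj, Set.mem_insert_iff,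
      Set.mem_sdiff, Set.mem_singleton_iff, Sym2.eq_iff]
    constructor
    · rintro (⟨huv, hu, hv⟩ | h)
      · exact Or.inr ⟨huv, by tauto⟩
      · exact Or.inl h
    · rintro (h | ⟨huv, hne⟩)
      · exact Or.inr h
      refine Or.inl ⟨huv, ?_, ?_⟩ <;> rintro rfl
      · exact hne (Or.inl ⟨rfl, hP.eq_of_adj_left huv hab⟩)
      · exact hne (Or.inr ⟨hP.eq_of_adj_left huv.symm hab, rfl⟩)

lemma IsMatching.exists_exchange (hP : P.IsMatching) (hab : P.Adj a b) (hc : c ∉ P.verts)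
    (hbc : G.Adj b c) :
    ∃ Q : G.Subgraph, Q.IsMatching ∧ a ∉ Q.verts ∧ Q.verts ⊆ insert c P.verts ∧
      Q.edgeSet = insert s(b, c) (P.edgeSet \ {s(a, b)}) ∧ Q.edgeSet.ncard = P.edgeSet.ncard := by
  have hedges := hP.edgeSet_deleteVerts_sup_subgraphOfAdj hab hbc
  have ha : a ∈ P.verts := P.edge_vert hab
  have hb : b ∈ P.verts := P.edge_vert hab.symm
  refine ⟨_, hP.deleteVerts_sup_subgraphOfAdj hab hc hbc, ?_, ?_, hedges, ?_⟩
  · have hac : a ≠ c := fun h => hc (h ▸ ha)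
    simp [hab.ne, hac]
  · simp only [verts_sup, deleteVerts_verts, subgraphOfAdj_verts]
    exact Set.union_subset (Set.sdiff_subset.trans (Set.subset_insert _ _))
      (Set.insert_subset (Set.mem_insert_of_mem _ hb) (by simp))
  · rw [hedges]
    exact Set.ncard_exchange (fun h => hc (P.mem_verts_of_mem_edge h (Sym2.mem_mk_right b c))) hab

lemma IsMatching.eq_of_le_of_ncard_le [Finite V] (hM : M.IsMatching) (hN : N.IsMatching)
    (hle : M ≤ N) (h : N.edgeSet.ncard ≤ M.edgeSet.ncard) : M = N :=
  IsMatching.injOn_edgeSet hM hN <|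
    Set.eq_of_subset_of_ncard_le (edgeSet_mono hle) h (Set.toFinite _)

lemma ncard_edgeSet_map {W : Type*} {G' : SimpleGraph W} {f : G →g G'}
    (hf : Function.Injective f) (M : G.Subgraph) :
    (M.map f).edgeSet.ncard = M.edgeSet.ncard := by
  rw [edgeSet_map, Set.ncard_image_of_injective _ (Sym2.map.injective hf)]

lemma IsMatching.edgeSet_eq_insert_of_le {F Z : G.Subgraph} {v t : V} (hF : F.IsMatching)
    (hZ : Z.IsMatching) (hle : F ≤ Z) (hvt : Z.Adj v t)
    (hcover : ∀ a b, G.Adj a b → a ≠ v → b ≠ v → a ∈ F.verts ∨ b ∈ F.verts) :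
    Z.edgeSet = insert s(v, t) F.edgeSet := by
  refine subset_antisymm (fun e he => ?_) (Set.insert_subset hvt (edgeSet_mono hle))
  induction e with
  | _ a b =>
    rw [Subgraph.mem_edgeSet] at he
    by_cases hav : a = v
    · subst hav
      rw [hZ.eq_of_adj_left he hvt]
      exact Set.mem_insert _ _
    by_cases hbv : b = v
    · subst hbv
      rw [Sym2.eq_swap, hZ.eq_of_adj_left he.symm hvt]
      exact Set.mem_insert _ _
    refine Set.mem_insert_of_mem _ ?_
    rcases hcover a b (Z.adj_sub he) hav hbv with ha | hb
    · exact hF.adj_of_le hZ hle ha he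
    · exact (hF.adj_of_le hZ hle hb he.symm).symm

end Subgraph

end SimpleGraph

open Subgraph

def IsMaximumMatching {V : Type*} (G : SimpleGraph V) (M : G.Subgraph) : Prop :=
  M.IsMatching ∧ ∀ P : G.Subgraph, P.IsMatching → P.edgeSet.ncard ≤ M.edgeSet.ncard

section Matchings

variable {V : Type*} {G : SimpleGraph V} {M P : G.Subgraph} {a b : V}

lemma IsMaximalMatching.mem_verts_or_mem_verts (hM : IsMaximalMatching G M) (hab : G.Adj a b) :
    a ∈ M.verts ∨ b ∈ M.verts := by
  by_contra! h
  have hsup := hM.2 _ (hM.1.sup_subgraphOfAdj h.1 h.2 hab) le_sup_left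
  exact h.1 (hsup ▸ Or.inr (by simp))

lemma IsMaximumMatching.of_ncard_eq (hM : IsMaximumMatching G M) (hP : P.IsMatching)
    (h : P.edgeSet.ncard = M.edgeSet.ncard) : IsMaximumMatching G P :=
  ⟨hP, fun Q hQ => h ▸ hM.2 Q hQ⟩

variable [Finite V]

lemma exists_isMaximalMatching_ge (hP : P.IsMatching) : ∃ M, IsMaximalMatching G M ∧ P ≤ M := by
  obtain ⟨M, hPM, hM⟩ := Finite.exists_le_maximal (p := Subgraph.IsMatching) hP
  exact ⟨M, ⟨hM.1, fun M' hM' hle => le_antisymm (hM.2 hM' hle) hle⟩, hPM⟩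

lemma IsMaximumMatching.isMaximalMatching (hM : IsMaximumMatching G M) :
    IsMaximalMatching G M :=
  ⟨hM.1, fun M' hM' hle => (hM.1.eq_of_le_of_ncard_le hM' hle (hM.2 M' hM')).symm⟩

lemma Equimatchable.isMaximumMatching (hG : Equimatchable G) (hM : IsMaximalMatching G M) :
    IsMaximumMatching G M := by
  refine ⟨hM.1, fun P hP => ?_⟩
  obtain ⟨Z, hZ, hPZ⟩ := exists_isMaximalMatching_ge hP
  exact hG Z M hZ hM ▸ Set.ncard_le_ncard (edgeSet_mono hPZ) (Set.toFinite _)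

end Matchings

section Bipartite

variable {V : Type*} [Finite V] {G : SimpleGraph V} {s : Set V}

/-- Induction along the path of `M ∆ N` that starts at `w`: if `wx ∈ M` and `xy ∈ N`, trading
`xy` for `xw` in `N` shrinks `M \ N`, and the matching found for the new `N` (which misses `y`) is
pulled back by trading `wx` for `xy`. The bound on `M'.edgeSet` is what makes `x` the partner of
`w` there. -/
theorem IsMaximumMatching.exists_isMatching_notMem_verts
    (hs : ∀ a b, G.Adj a b → (a ∈ s ↔ b ∉ s)) {M N : G.Subgraph} (hM : M.IsMatching)
    (hN : IsMaximumMatching G N) {w : V} (hw : w ∉ s) (hwN : w ∉ N.verts) :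
    ∃ M' : G.Subgraph, M'.IsMatching ∧ M'.edgeSet.ncard = M.edgeSet.ncard ∧ w ∉ M'.verts ∧
      M'.verts ∩ s ⊆ M.verts ∧ M'.edgeSet ⊆ M.edgeSet ∪ N.edgeSet := by
  induction hn : (M.edgeSet \ N.edgeSet).ncard using Nat.strong_induction_on
    generalizing N w with
  | _ n ih =>
  by_cases hwM : w ∉ M.verts
  · exact ⟨M, hM, rfl, hwM, Set.inter_subset_left, Set.subset_union_left⟩
  obtain ⟨x, hwx, -⟩ := hM (not_not.mp hwM)
  have hx : x ∈ s := by have := hs w x (M.adj_sub hwx); tauto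
  obtain ⟨y, hxy, -⟩ :=
    hN.1 ((hN.isMaximalMatching.mem_verts_or_mem_verts (M.adj_sub hwx)).resolve_left hwN)
  have hy : y ∉ s := (hs x y (N.adj_sub hxy)).mp hx
  have hyw : y ≠ w := by rintro rfl; exact hwN (N.edge_vert hxy.symm)
  obtain ⟨N₁, hN₁, hyN₁, -, hN₁e, hN₁c⟩ :=
    hN.1.exists_exchange hxy.symm hwN (M.adj_sub hwx).symm
  have hxyM : s(y, x) ∉ M.edgeSet := fun h => hyw (hM.eq_of_adj_left (M.adj_symm h) hwx.symm)
  have hlt : (M.edgeSet \ N₁.edgeSet).ncard < n := by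
    rw [hN₁e, ← hn]
    exact Set.ncard_sdiff_insert_sdiff_lt (M.adj_symm hwx)
      (fun h => hwN (N.mem_verts_of_mem_edge h (Sym2.mem_mk_right x w))) hxyM
  have hN₁MN : N₁.edgeSet ⊆ M.edgeSet ∪ N.edgeSet := by
    rw [hN₁e, Set.insert_subset_iff]
    exact ⟨Or.inl (M.adj_symm hwx), Set.sdiff_subset.trans Set.subset_union_right⟩
  obtain ⟨M'', hM'', hc'', hyM'', hs'', he''⟩ := ih _ hlt (hN.of_ncard_eq hN₁ hN₁c) hy hyN₁ rfl
  have hM''MN : M''.edgeSet ⊆ M.edgeSet ∪ N.edgeSet :=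
    he''.trans (Set.union_subset Set.subset_union_left hN₁MN)
  by_cases hwM'' : w ∉ M''.verts
  · exact ⟨M'', hM'', hc'', hwM'', hs'', hM''MN⟩
  obtain ⟨t, hwt, -⟩ := hM'' (not_not.mp hwM'')
  have htx : t = x := by
    rcases he'' (show s(w, t) ∈ M''.edgeSet from hwt) with h | h
    · exact hM.eq_of_adj_left h hwx
    rw [hN₁e] at h
    rcases h with h | ⟨h, -⟩
    · rcases Sym2.eq_iff.mp h with ⟨h, -⟩ | ⟨-, h⟩
      exacts [absurd h (M.adj_sub hwx).ne, h]
    · exact absurd (N.edge_vert h) hwN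
  subst htx
  obtain ⟨M', hM', hwM', hM'v, hM'e, hM'c⟩ := hM''.exists_exchange hwt hyM'' (N.adj_sub hxy)
  refine ⟨M', hM', hM'c.trans hc'', hwM', fun z ⟨hz, hzs⟩ => ?_, ?_⟩
  · rcases hM'v hz with rfl | hz
    exacts [absurd hzs hy, hs'' ⟨hz, hzs⟩]
  · rw [hM'e, Set.insert_subset_iff]
    exact ⟨Or.inr hxy, Set.sdiff_subset.trans hM''MN⟩

theorem IsMaximumMatching.not_adj (hs : ∀ a b, G.Adj a b → (a ∈ s ↔ b ∉ s))
    {M N : G.Subgraph} (hM : IsMaximumMatching G M) (hN : IsMaximumMatching G N) {u w : V}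
    (hu : u ∈ s) (huM : u ∉ M.verts) (hwN : w ∉ N.verts) : ¬ G.Adj u w := by
  intro huw
  obtain ⟨M', hM', hc, hwM', hsM', -⟩ :=
    hN.exists_isMatching_notMem_verts hs hM.1 ((hs u w huw).mp hu) hwN
  have huM' : u ∉ M'.verts := fun h => huM (hsM' ⟨h, hu⟩)
  have := ((hM.of_ncard_eq hM' hc).isMaximalMatching.mem_verts_or_mem_verts huw)
  tauto

end Bipartite

section Criticality

variable {V : Type*} [Finite V] {G : SimpleGraph V} {v : V}

lemma IsMaximalMatching.exists_ncard_eq_add_one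
    (hv : ∀ Z, IsMaximalMatching G Z → v ∈ Z.verts) {M : (G.induce {u | u ≠ v}).Subgraph}
    (hM : IsMaximalMatching _ M) :
    ∃ Z, IsMaximalMatching G Z ∧ Z.edgeSet.ncard = M.edgeSet.ncard + 1 := by
  let f := (Embedding.induce {u | u ≠ v} : G.induce {u | u ≠ v} ↪g G).toHom
  have hf : Function.Injective f := Subtype.val_injective
  have hF := hM.1.map f hf
  have hvF : v ∉ (M.map f).verts := by
    rintro ⟨⟨a, ha⟩, -, h⟩
    exact ha h
  have hcover : ∀ a b, G.Adj a b → a ≠ v → b ≠ v → a ∈ (M.map f).verts ∨ b ∈ (M.map f).verts :=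
    fun a b hab ha hb =>
      (hM.mem_verts_or_mem_verts (a := ⟨a, ha⟩) (b := ⟨b, hb⟩) (by exact hab)).imp
        (fun h => ⟨_, h, rfl⟩) (fun h => ⟨_, h, rfl⟩)
  obtain ⟨Z, hZ, hle⟩ := exists_isMaximalMatching_ge hF
  obtain ⟨t, hvt, -⟩ := hZ.1 (hv Z hZ)
  refine ⟨Z, hZ, ?_⟩
  rw [hF.edgeSet_eq_insert_of_le hZ.1 hle hvt hcover, Set.ncard_insert_of_notMem
    (fun h => hvF ((M.map f).mem_verts_of_mem_edge h (Sym2.mem_mk_left v t))) (Set.toFinite _),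
    ncard_edgeSet_map hf]

lemma Equimatchable.induce_ne (hG : Equimatchable G)
    (hv : ∀ Z, IsMaximalMatching G Z → v ∈ Z.verts) : Equimatchable (G.induce {u | u ≠ v}) := by
  intro M₁ M₂ h₁ h₂
  obtain ⟨Z₁, hZ₁, hc₁⟩ := h₁.exists_ncard_eq_add_one hv
  obtain ⟨Z₂, hZ₂, hc₂⟩ := h₂.exists_ncard_eq_add_one hv
  have := hG Z₁ Z₂ hZ₁ hZ₂
  omega

end Criticality

lemma equimatchable_of_forall_not_adj {V : Type*} {G : SimpleGraph V} (h : ∀ a b, ¬ G.Adj a b) :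
    Equimatchable G := by
  have hempty (M : G.Subgraph) : M.edgeSet = ∅ :=
    Set.eq_empty_of_forall_notMem fun e he => by
      induction e with
      | _ a b => exact h a b (M.adj_sub he)
  intro M₁ M₂ _ _
  rw [hempty, hempty]

/-- No connected bipartite graph is vertex-critical equimatchable. -/
theorem bipartite_not_vce {V : Type*} [Fintype V] (G : SimpleGraph V)
    (hconn : G.Connected) (hbip : IsBipartiteGraph G) : ¬ VCE G := by
  rintro ⟨hG, hcrit⟩
  obtain ⟨s, hs⟩ := hbip
  have hmiss (v : V) : ∃ M, IsMaximumMatching G M ∧ v ∉ M.verts := by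
    by_contra! h
    exact hcrit v (hG.induce_ne fun Z hZ => h Z (hG.isMaximumMatching hZ))
  by_cases hedge : ∃ u w, G.Adj u w
  · obtain ⟨u, w, huw⟩ := hedge
    obtain ⟨M, hM, huM⟩ := hmiss u
    obtain ⟨N, hN, hwN⟩ := hmiss w
    by_cases hu : u ∈ s
    · exact hM.not_adj hs hN hu huM hwN huw
    · exact hN.not_adj hs hM (by have := hs u w huw; tauto) hwN huM huw.symm
  · push Not at hedge
    obtain ⟨v⟩ := hconn.nonempty
    exact hcrit v (equimatchable_of_forall_not_adj fun a b => hedge a b)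
end

section
/- Let G be a connected equimatchable graph with at least 3 vertices and let uv be an edge of G. Then the graph G − uv obtained by deleting the edge uv is not equimatchable if and only if there exists a matching of G that contains the edge uv and saturates every vertex of N(u) ∪ N(v). -/
open SimpleGraph

/-! A matching is maximal iff it covers an endpoint of every edge. Hence a maximal matching of
`G - uv` covering `u` or `v` is also maximal in `G`; so if `G - uv` is not equimatchable, one of its
maximal matchings `N` misses both `u` and `v`, and `N + uv` is the required matching. Conversely,
extend such a matching to a maximal matching `M` of `G`. Removing `uv` from `M` leaves a maximal
matching of `G - uv` with `|M| - 1` edges, because `M` covers `N(u) ∪ N(v)`. On the other hand, as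
`G` is connected with at least three vertices there is an edge `aw` with `a ∈ {u, v}` and
`w ∉ {u, v}`; a maximal matching of `G - uv` through it is maximal in `G`, so has `|M|` edges. -/

namespace SimpleGraph

variable {V : Type*} {G : SimpleGraph V} {u v : V}

theorem deleteEdges_adj_of_ne {a b : V} (hab : G.Adj a b) (hbu : b ≠ u) (hbv : b ≠ v) :
    (G.deleteEdges {s(u, v)}).Adj a b := by
  simp [hab, hbu, hbv]

theorem ne_and_ne_of_deleteEdges_adj {a b : V} (hab : (G.deleteEdges {s(u, v)}).Adj a b)
    (ha : a = u ∨ a = v) : b ≠ u ∧ b ≠ v := by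
  rw [deleteEdges_adj] at hab
  grind [hab.1.ne]

theorem Subgraph.IsMatching.sym2_eq_of_adj {M : G.Subgraph} (hM : M.IsMatching)
    (huv : M.Adj u v) ⦃x y : V⦄ (hxy : M.Adj x y) (hx : x = u ∨ x = v) : s(x, y) = s(u, v) := by
  rcases hx with rfl | rfl
  · rw [hM.eq_of_adj_left hxy huv]
  · rw [hM.eq_of_adj_left hxy huv.symm, Sym2.eq_swap]

theorem Connected.exists_adj_mem_notMem (hconn : G.Connected) {S : Set V} {a z : V}
    (ha : a ∈ S) (hz : z ∉ S) : ∃ x ∈ S, ∃ w ∉ S, G.Adj x w := by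
  obtain ⟨d, -, hd, hdz⟩ := (hconn.preconnected a z).some.exists_boundary_dart S ha hz
  exact ⟨d.fst, hd, d.snd, hdz, d.adj⟩

end SimpleGraph

theorem exists_notMem_pair_of_three_le_card {V : Type*} [Fintype V]
    (hcard : 3 ≤ Fintype.card V) (u v : V) : ∃ z, z ∉ ({u, v} : Set V) := by
  classical
  obtain ⟨z, -, hz⟩ := Finset.exists_mem_notMem_of_card_lt_card (s := {u, v})
    (t := Finset.univ) (Finset.card_le_two.trans_lt (by simpa using Nat.lt_of_succ_le hcard))
  exact ⟨z, by simpa using hz⟩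

section

variable {V : Type*} {G H : SimpleGraph V} {u v : V}

open Subgraph

theorem isMaximalMatching_iff {M : G.Subgraph} :
    IsMaximalMatching G M ↔
      M.IsMatching ∧ ∀ a b, G.Adj a b → a ∈ M.verts ∨ b ∈ M.verts := by
  refine ⟨fun ⟨hM, hmax⟩ ↦ ⟨hM, fun a b hab ↦ ?_⟩, fun ⟨hM, hcov⟩ ↦ ⟨hM, fun M' hM' hle ↦ ?_⟩⟩
  · by_contra! h
    have hdisj : Disjoint M.support (G.subgraphOfAdj hab).support := by
      simp [hM.support_eq_verts, support_subgraphOfAdj, h.1, h.2]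
    have hsup := hmax _ (hM.sup (.subgraphOfAdj hab) hdisj) le_sup_left
    exact h.1 (hsup.le.1 (by simp))
  · have hadj : ∀ ⦃x y⦄, M'.Adj x y → M.Adj x y := by
      intro x y hxy
      rcases hcov x y (M'.adj_sub hxy) with hx | hy
      · obtain ⟨z, hz, -⟩ := hM hx
        rwa [hM'.eq_of_adj_left hxy (hle.2 hz)]
      · obtain ⟨z, hz, -⟩ := hM hy
        rwa [hM'.eq_of_adj_right hxy (hle.2 hz).symm, ← M.adj_comm]
    have hverts : M'.verts ⊆ M.verts := fun x hx ↦ by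
      obtain ⟨y, hy, -⟩ := hM' hx
      exact M.edge_vert (hadj hy)
    exact le_antisymm (show M' ≤ M from ⟨hverts, hadj⟩) hle

theorem IsMaximalMatching.mem_verts_of_adj {N : G.Subgraph} (hN : IsMaximalMatching G N)
    {a b : V} (hab : G.Adj a b) (ha : a ∉ N.verts) : b ∈ N.verts :=
  ((isMaximalMatching_iff.1 hN).2 a b hab).resolve_left ha

theorem exists_isMaximalMatching_ge_s8 [Finite V] {M : G.Subgraph} (hM : M.IsMatching) :
    ∃ M', M ≤ M' ∧ IsMaximalMatching G M' := by
  obtain ⟨M', ⟨hM', hle⟩, hmax⟩ := Set.Finite.exists_maximalFor id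
    {M' : G.Subgraph | M'.IsMatching ∧ M ≤ M'} (Set.toFinite _) ⟨M, hM, le_rfl⟩
  exact ⟨M', hle, hM', fun M'' hM'' hle' ↦ le_antisymm (hmax ⟨hM'', hle.trans hle'⟩ hle') hle'⟩

theorem IsMaximalMatching.map_ofLE (h : H ≤ G) {N : H.Subgraph} (hN : IsMaximalMatching H N)
    (hcov : ∀ a b, G.Adj a b → ¬ H.Adj a b → a ∈ N.verts ∨ b ∈ N.verts) :
    IsMaximalMatching G (N.map (Hom.ofLE h)) := by
  rw [isMaximalMatching_iff] at hN ⊢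
  refine ⟨hN.1.map_ofLE h, fun a b hab ↦ ?_⟩
  by_cases hH : H.Adj a b
  · simpa using hN.2 a b hH
  · simpa using hcov a b hab hH

theorem IsMaximalMatching.map_deleteEdges {N : (G.deleteEdges {s(u, v)}).Subgraph}
    (hN : IsMaximalMatching _ N) (hsat : u ∈ N.verts ∨ v ∈ N.verts) :
    IsMaximalMatching G (N.map (Hom.ofLE (G.deleteEdges_le _))) := by
  refine hN.map_ofLE _ fun a b hab hnot ↦ ?_
  have hab' : s(a, b) = s(u, v) := by
    by_contra hne
    exact hnot (SimpleGraph.deleteEdges_adj.2 ⟨hab, hne⟩)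
  rcases Sym2.eq_iff.1 hab' with ⟨rfl, rfl⟩ | ⟨rfl, rfl⟩
  exacts [hsat, hsat.symm]

theorem Equimatchable.deleteEdges_of_forall_mem (heq : Equimatchable G)
    (h : ∀ N, IsMaximalMatching (G.deleteEdges {s(u, v)}) N → u ∈ N.verts ∨ v ∈ N.verts) :
    Equimatchable (G.deleteEdges {s(u, v)}) := fun N₁ N₂ h₁ h₂ ↦ by
  simpa using heq _ _ (h₁.map_deleteEdges (h _ h₁)) (h₂.map_deleteEdges (h _ h₂))

theorem exists_isMatching_of_isMaximalMatching_deleteEdges (huv : G.Adj u v)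
    {N : (G.deleteEdges {s(u, v)}).Subgraph} (hN : IsMaximalMatching _ N)
    (hu : u ∉ N.verts) (hv : v ∉ N.verts) :
    ∃ M : G.Subgraph, M.IsMatching ∧ M.Adj u v ∧ G.neighborSet u ∪ G.neighborSet v ⊆ M.verts := by
  have hle := G.deleteEdges_le {s(u, v)}
  have hL := hN.1.map_ofLE hle
  have hdisj : Disjoint (N.map (Hom.ofLE hle)).support (G.subgraphOfAdj huv).support := by
    simp [hL.support_eq_verts, support_subgraphOfAdj, hu, hv]
  refine ⟨_, hL.sup (.subgraphOfAdj huv) hdisj, by simp, fun w hw ↦ ?_⟩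
  by_cases hwu : w = u
  · simp [hwu]
  by_cases hwv : w = v
  · simp [hwv]
  obtain ⟨a, ha, haw⟩ : ∃ a, (a = u ∨ a = v) ∧ G.Adj a w :=
    hw.elim (fun h ↦ ⟨u, .inl rfl, h⟩) (fun h ↦ ⟨v, .inr rfl, h⟩)
  have haN : a ∉ N.verts := by rcases ha with rfl | rfl <;> assumption
  simp [hN.mem_verts_of_adj (deleteEdges_adj_of_ne haw hwu hwv) haN]

theorem IsMaximalMatching.exists_isMaximalMatching_deleteEdges [Finite V] {M : G.Subgraph}
    (hM : IsMaximalMatching G M) (huv : M.Adj u v)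
    (hsat : G.neighborSet u ∪ G.neighborSet v ⊆ M.verts) :
    ∃ N : (G.deleteEdges {s(u, v)}).Subgraph,
      IsMaximalMatching _ N ∧ N.edgeSet.ncard + 1 = M.edgeSet.ncard := by
  have hMm : M.IsMatching := hM.1
  set N := (M.deleteVerts {u, v}).comap (Hom.ofLE (G.deleteEdges_le {s(u, v)}))
  have hNverts : ∀ x, x ∈ N.verts ↔ x ∈ M.verts ∧ x ≠ u ∧ x ≠ v := by
    simp [N]
  have hNadj : ∀ x y, N.Adj x y ↔ M.Adj x y ∧ s(x, y) ≠ s(u, v) := by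
    intro x y
    have hpair := hMm.sym2_eq_of_adj huv
    constructor
    · simp +contextual [N]
    · rintro ⟨hxy, hne⟩
      have hx : ¬(x = u ∨ x = v) := fun hx ↦ hne (hpair hxy hx)
      have hy : ¬(y = u ∨ y = v) := fun hy ↦ hne (by rw [Sym2.eq_swap]; exact hpair hxy.symm hy)
      simp only [not_or] at hx hy
      simp [N, hxy, M.adj_sub hxy, M.edge_vert hxy, M.edge_vert hxy.symm, hx, hy]
  have hNmatch : N.IsMatching := by
    intro x hx
    obtain ⟨hxM, hxu, hxv⟩ := (hNverts x).1 hx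
    obtain ⟨y, hxy, hy⟩ := hMm hxM
    refine ⟨y, (hNadj x y).2 ⟨hxy, fun h ↦ ?_⟩, fun z hz ↦ hy z ((hNadj x z).1 hz).1⟩
    exact (Sym2.mem_iff.1 (h ▸ Sym2.mem_mk_left x y)).elim hxu hxv
  have hNedge : N.edgeSet = M.edgeSet \ {s(u, v)} := by
    ext e
    induction e using Sym2.ind with
    | _ x y => simp [hNadj]
  refine ⟨N, isMaximalMatching_iff.2 ⟨hNmatch, fun a b hab ↦ ?_⟩, ?_⟩
  · have hnbr : ∀ ⦃x y⦄, G.Adj x y → (x = u ∨ x = v) → y ∈ M.verts := by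
      rintro x y hxy (rfl | rfl)
      exacts [hsat (Or.inl hxy), hsat (Or.inr hxy)]
    rw [hNverts, hNverts]
    by_cases ha : a = u ∨ a = v
    · exact .inr ⟨hnbr hab.1 ha, ne_and_ne_of_deleteEdges_adj hab ha⟩
    by_cases hb : b = u ∨ b = v
    · exact .inl ⟨hnbr hab.1.symm hb, ne_and_ne_of_deleteEdges_adj hab.symm hb⟩
    push Not at ha hb
    rcases (isMaximalMatching_iff.1 hM).2 a b hab.1 with h | h
    exacts [.inl ⟨h, ha⟩, .inr ⟨h, hb⟩]
  · rw [hNedge]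
    exact Set.ncard_sdiff_singleton_add_one huv (Set.toFinite _)

theorem exists_isMaximalMatching_deleteEdges_mem [Finite V] {a w : V} (haw : G.Adj a w)
    (ha : a ∈ ({u, v} : Set V)) (hw : w ∉ ({u, v} : Set V)) :
    ∃ N : (G.deleteEdges {s(u, v)}).Subgraph,
      IsMaximalMatching _ N ∧ (u ∈ N.verts ∨ v ∈ N.verts) := by
  simp only [Set.mem_insert_iff, Set.mem_singleton_iff, not_or] at ha hw
  obtain ⟨N, hle, hN⟩ :=
    exists_isMaximalMatching_ge_s8 (IsMatching.subgraphOfAdj (deleteEdges_adj_of_ne haw hw.1 hw.2))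
  have haN : a ∈ N.verts := hle.1 (by simp)
  exact ⟨N, hN, by rcases ha with rfl | rfl <;> simp [haN]⟩

end

/-- Let `G` be a connected equimatchable graph with at least 3 vertices and let `uv` be an
edge of `G`. Then `G − uv` is not equimatchable if and only if there is a matching of `G`
containing `uv` and saturating every vertex of `N(u) ∪ N(v)`. -/
theorem critical_edge_iff_matching {V : Type*} [Fintype V] (G : SimpleGraph V)
    (hconn : G.Connected) (hcard : 3 ≤ Fintype.card V) (heq : Equimatchable G)
    (u v : V) (huv : G.Adj u v) :
    ¬ Equimatchable (G.deleteEdges {s(u, v)}) ↔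
      ∃ M : G.Subgraph, M.IsMatching ∧ M.Adj u v ∧
        ∀ w : V, w ∈ G.neighborSet u ∪ G.neighborSet v → w ∈ M.verts := by
  refine ⟨fun hne ↦ ?_, fun ⟨M₀, hM₀, huv₀, hsat₀⟩ hEq ↦ ?_⟩
  · obtain ⟨N, hN, hu, hv⟩ : ∃ N, IsMaximalMatching _ N ∧ u ∉ N.verts ∧ v ∉ N.verts := by
      by_contra! h
      exact hne (heq.deleteEdges_of_forall_mem fun N hN ↦ or_iff_not_imp_left.2 (h N hN))
    exact exists_isMatching_of_isMaximalMatching_deleteEdges huv hN hu hv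
  · obtain ⟨M, hle, hM⟩ := exists_isMaximalMatching_ge_s8 hM₀
    obtain ⟨N, hN, hNM⟩ :=
      hM.exists_isMaximalMatching_deleteEdges (hle.2 huv₀) fun w hw ↦ hle.1 (hsat₀ w hw)
    obtain ⟨z, hz⟩ := exists_notMem_pair_of_three_le_card hcard u v
    obtain ⟨a, ha, w, hw, haw⟩ := hconn.exists_adj_mem_notMem (Set.mem_insert u {v}) hz
    obtain ⟨N', hN', hsat'⟩ := exists_isMaximalMatching_deleteEdges_mem haw ha hw
    have hN'M := heq _ _ (hN'.map_deleteEdges hsat') hM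
    have hNN' := hEq _ _ hN hN'
    simp only [Subgraph.edgeSet_map, Hom.coe_ofLE, Sym2.map_id, Set.image_id] at hN'M
    omega
end

section
/- Let p, q ≥ 1 be integers and let G be the graph whose vertex set is the disjoint union A ∪ B ∪ {s₁, s₂}, where |A| = 2q and |B| = 2p+1 and B is partitioned into two nonempty parts B₁ and B₂, and whose edges are exactly: all pairs of distinct vertices inside A (so A induces K_{2q}); all pairs of distinct vertices inside B (so B induces K_{2p+1}); all pairs with one endpoint in {s₁, s₂} and the other in A; all pairs with one endpoint s₁ and the other in B₁; and all pairs with one endpoint s₂ and the other in B₂ (in particular s₁ and s₂ are not adjacent and there are no edges between A and B). Then G is edge-critical equimatchable. -/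
open SimpleGraph

/-! `G` has `2p + 2q + 3` vertices and no independent set of size three, so every maximal matching
leaves exactly one vertex unsaturated and `G` is equimatchable. Deleting an edge `uv` creates an
independent triple containing `u` and `v`; for each kind of edge (inside `A`, inside `B`, from `sᵢ`
to `A`, from `sᵢ` to `Bᵢ`) such a triple can be chosen so that its complement splits into edges
at `s₁`, `s₂` and even cliques inside `A` and `B`. Together with a matching of `G - uv` missing a
single vertex, this gives maximal matchings of sizes `p + q + 1` and `p + q`. -/

namespace SimpleGraph

variable {V : Type*} {H : SimpleGraph V}

lemma isIndepSet_triple {x y z : V} :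
    H.IsIndepSet {x, y, z} ↔ ¬ H.Adj x y ∧ ¬ H.Adj x z ∧ ¬ H.Adj y z := by
  simp only [IsIndepSet, Set.pairwise_insert, Set.pairwise_singleton, Set.mem_singleton_iff,
    ne_eq, forall_eq, true_and, Set.mem_insert_iff, forall_eq_or_imp]
  grind [H.adj_symm, SimpleGraph.irrefl]

lemma adj_deleteEdges {x y u v : V} (hxy : H.Adj x y) (hxu : x ≠ u) (hxv : x ≠ v) :
    (H.deleteEdges {s(u, v)}).Adj x y := by
  simp only [deleteEdges_adj, Set.mem_singleton_iff, Sym2.eq_iff]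
  tauto

lemma isClique_deleteEdges {S : Set V} {u v : V} (hS : H.IsClique S) (hu : u ∉ S) :
    (H.deleteEdges {s(u, v)}).IsClique S := by
  intro x hx y hy hxy
  simp only [deleteEdges_adj, Set.mem_singleton_iff, Sym2.eq_iff]
  exact ⟨hS hx hy hxy, by rintro (⟨rfl, -⟩ | ⟨-, rfl⟩) <;> contradiction⟩

namespace Subgraph

variable {M : H.Subgraph}

lemma IsMatching.ncard_verts [Finite V] (hM : M.IsMatching) :
    M.verts.ncard = 2 * M.edgeSet.ncard := by
  have := Fintype.ofFinite V
  classical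
  rw [← Nat.card_coe_set_eq, ← Nat.card_coe_set_eq,
    ← Nat.card_congr (Equiv.sigmaFiberEquiv hM.toEdge), Nat.card_sigma,
    Nat.card_eq_fintype_card (α := M.edgeSet), ← Finset.card_univ, mul_comm, ← smul_eq_mul,
    ← Finset.sum_const]
  refine Finset.sum_congr rfl fun ⟨e, he⟩ _ => ?_
  induction e with | h x y =>
  change Nat.card ↥(hM.toEdge ⁻¹' {⟨s(x, y), he⟩}) = 2
  rw [Nat.card_coe_set_eq, hM.toEdge_preimage_singleton he, Set.ncard_pair]
  simpa [Subtype.ext_iff] using he.ne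

lemma IsMatching.sup_subgraphOfAdj_s14 {x y : V} (hM : M.IsMatching) (hxy : H.Adj x y)
    (hx : x ∉ M.verts) (hy : y ∉ M.verts) : (M ⊔ H.subgraphOfAdj hxy).IsMatching := by
  refine hM.sup (.subgraphOfAdj hxy) ?_
  rw [hM.support_eq_verts, (IsMatching.subgraphOfAdj hxy).support_eq_verts,
    subgraphOfAdj_verts, Set.disjoint_insert_right, Set.disjoint_singleton_right]
  exact ⟨hx, hy⟩

end Subgraph

lemma exists_isMatching_insert_insert {S : Set V} {x y : V} (hxy : H.Adj x y)
    (hx : x ∉ S) (hy : y ∉ S) (hS : ∃ M : H.Subgraph, M.verts = S ∧ M.IsMatching) :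
    ∃ M : H.Subgraph, M.verts = insert x (insert y S) ∧ M.IsMatching := by
  obtain ⟨M, rfl, hM⟩ := hS
  refine ⟨M ⊔ H.subgraphOfAdj hxy, ?_, hM.sup_subgraphOfAdj_s14 hxy hx hy⟩
  rw [Subgraph.verts_sup, subgraphOfAdj_verts, Set.union_insert, Set.union_singleton]

lemma exists_isMatching_union_of_isClique [Finite V] {S T : Set V} (hST : Disjoint S T)
    (hS : H.IsClique S) (hT : H.IsClique T) (hSe : Even S.ncard) (hTe : Even T.ncard) :
    ∃ M : H.Subgraph, M.verts = S ∪ T ∧ M.IsMatching := by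
  obtain ⟨M, rfl, hM⟩ := (hS.even_iff_exists_isMatching (Set.toFinite S)).mp hSe
  obtain ⟨M', rfl, hM'⟩ := (hT.even_iff_exists_isMatching (Set.toFinite T)).mp hTe
  refine ⟨M ⊔ M', rfl, hM.sup hM' ?_⟩
  rwa [hM.support_eq_verts, hM'.support_eq_verts]

end SimpleGraph

section Equimatchable

variable {V : Type*} {H : SimpleGraph V} {M : H.Subgraph}

lemma isMaximalMatching_iff_s14 (hM : M.IsMatching) :
    IsMaximalMatching H M ↔ ∀ ⦃u v⦄, u ∉ M.verts → v ∉ M.verts → ¬ H.Adj u v := by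
  refine ⟨fun hmax u v hu hv huv => ?_, fun hind => ⟨hM, fun M' hM' hle => ?_⟩⟩
  · have := hmax.2 _ (hM.sup_subgraphOfAdj_s14 huv hu hv) le_sup_left
    exact hu (this ▸ Or.inr (Or.inl rfl))
  · have hadj_of_mem : ∀ ⦃x y⦄, M'.Adj x y → x ∈ M.verts → M.Adj x y := by
      intro x y hxy hx
      obtain ⟨z, hz, -⟩ := hM hx
      rwa [hM'.eq_of_adj_left hxy (hle.2 hz)]
    have hadj : ∀ ⦃x y⦄, M'.Adj x y → M.Adj x y := by
      intro x y hxy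
      by_cases hx : x ∈ M.verts
      · exact hadj_of_mem hxy hx
      by_cases hy : y ∈ M.verts
      · exact (hadj_of_mem hxy.symm hy).symm
      · exact absurd (M'.adj_sub hxy) (hind hx hy)
    refine le_antisymm (show M'.verts ⊆ M.verts ∧ _ from ⟨fun x hx => ?_, fun x y hxy => hadj hxy⟩)
      hle
    obtain ⟨y, hxy, -⟩ := hM' hx
    exact (hadj hxy).fst_mem

lemma IsMaximalMatching.ncard_compl_verts_le_two [Finite V] (hM : IsMaximalMatching H M)
    (hH : ∀ x y z, x ≠ y → x ≠ z → y ≠ z → H.Adj x y ∨ H.Adj x z ∨ H.Adj y z) :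
    M.vertsᶜ.ncard ≤ 2 := by
  by_contra! h
  obtain ⟨x, y, z, hx, hy, hz, hxy, hxz, hyz⟩ := (Set.two_lt_ncard_iff (Set.toFinite _)).mp h
  have hind := (isMaximalMatching_iff_s14 hM.1).mp hM
  rcases hH x y z hxy hxz hyz with h | h | h
  exacts [hind hx hy h, hind hx hz h, hind hy hz h]

theorem equimatchable_of_odd_card [Finite V] (hodd : Odd (Nat.card V))
    (hH : ∀ x y z, x ≠ y → x ≠ z → y ≠ z → H.Adj x y ∨ H.Adj x z ∨ H.Adj y z) :
    Equimatchable H := by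
  suffices ∀ M : H.Subgraph, IsMaximalMatching H M → 2 * M.edgeSet.ncard + 1 = Nat.card V by
    intro M₁ M₂ h₁ h₂
    have h₁ := this M₁ h₁
    have h₂ := this M₂ h₂
    omega
  intro M hM
  have hle := hM.ncard_compl_verts_le_two hH
  have hsum := Set.ncard_add_ncard_compl M.verts
  rw [hM.1.ncard_verts] at hsum
  obtain ⟨k, hk⟩ := hodd
  omega

lemma exists_isMaximalMatching_of_isIndepSet [Finite V] {U : Set V} (hU : H.IsIndepSet U)
    (hUc : ∃ M : H.Subgraph, M.verts = Uᶜ ∧ M.IsMatching) :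
    ∃ M, IsMaximalMatching H M ∧ 2 * M.edgeSet.ncard + U.ncard = Nat.card V := by
  obtain ⟨M, hMU, hM⟩ := hUc
  refine ⟨M, (isMaximalMatching_iff_s14 hM).mpr fun u v hu hv => ?_, ?_⟩
  · rw [hMU, Set.notMem_compl_iff] at hu hv
    exact fun huv => hU hu hv huv.ne huv
  · rw [← hM.ncard_verts, hMU, add_comm, Set.ncard_add_ncard_compl]

lemma not_equimatchable_of_isMatching_compl [Finite V] {w x y z : V} (hxy : x ≠ y)
    (hind : H.IsIndepSet {x, y, z}) (h₁ : ∃ M : H.Subgraph, M.verts = {w}ᶜ ∧ M.IsMatching)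
    (h₃ : ∃ M : H.Subgraph, M.verts = {x, y, z}ᶜ ∧ M.IsMatching) : ¬ Equimatchable H := by
  intro hH
  obtain ⟨M₁, hmax₁, hcard₁⟩ :=
    exists_isMaximalMatching_of_isIndepSet (Set.pairwise_singleton w _) h₁
  obtain ⟨M₃, hmax₃, hcard₃⟩ := exists_isMaximalMatching_of_isIndepSet hind h₃
  have hpair : ({x, y} : Set V).ncard ≤ ({x, y, z} : Set V).ncard :=
    Set.ncard_le_ncard (Set.insert_subset_insert (by simp))
  rw [Set.ncard_pair hxy] at hpair
  rw [Set.ncard_singleton] at hcard₁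
  have := hH M₁ M₃ hmax₁ hmax₃
  omega

end Equimatchable

open SimpleGraph

structure IsTypeI {V : Type*} (G : SimpleGraph V) (p q : ℕ) (A B B₁ B₂ : Set V) (s₁ s₂ : V) :
    Prop where
  one_le_p : 1 ≤ p
  one_le_q : 1 ≤ q
  ne : s₁ ≠ s₂
  s₁_notMem_A : s₁ ∉ A
  s₂_notMem_A : s₂ ∉ A
  s₁_notMem_B : s₁ ∉ B
  s₂_notMem_B : s₂ ∉ B
  disjoint_A_B : Disjoint A B
  union_eq_univ : A ∪ B ∪ {s₁, s₂} = Set.univ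
  ncard_A : A.ncard = 2 * q
  ncard_B : B.ncard = 2 * p + 1
  B₁_nonempty : B₁.Nonempty
  B₂_nonempty : B₂.Nonempty
  union_B₁_B₂ : B₁ ∪ B₂ = B
  disjoint_B₁_B₂ : Disjoint B₁ B₂
  adj_iff : ∀ x y : V, G.Adj x y ↔ x ≠ y ∧
    ((x ∈ A ∧ y ∈ A) ∨ (x ∈ B ∧ y ∈ B) ∨
      ((x = s₁ ∨ x = s₂) ∧ y ∈ A) ∨ ((y = s₁ ∨ y = s₂) ∧ x ∈ A) ∨
      (x = s₁ ∧ y ∈ B₁) ∨ (y = s₁ ∧ x ∈ B₁) ∨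
      (x = s₂ ∧ y ∈ B₂) ∨ (y = s₂ ∧ x ∈ B₂))

namespace IsTypeI

variable {V : Type*} {G : SimpleGraph V} {p q : ℕ} {A B B₁ B₂ : Set V} {s₁ s₂ : V}

lemma symm (h : IsTypeI G p q A B B₁ B₂ s₁ s₂) : IsTypeI G p q A B B₂ B₁ s₂ s₁ where
  __ := h
  ne := h.ne.symm
  s₁_notMem_A := h.s₂_notMem_A
  s₂_notMem_A := h.s₁_notMem_A
  s₁_notMem_B := h.s₂_notMem_B
  s₂_notMem_B := h.s₁_notMem_B
  union_eq_univ := by rw [Set.pair_comm, h.union_eq_univ]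
  B₁_nonempty := h.B₂_nonempty
  B₂_nonempty := h.B₁_nonempty
  union_B₁_B₂ := by rw [Set.union_comm, h.union_B₁_B₂]
  disjoint_B₁_B₂ := h.disjoint_B₁_B₂.symm
  adj_iff x y := by
    rw [h.adj_iff]
    refine and_congr_right fun _ => ?_
    constructor <;> intro hxy <;>
      rcases hxy with h | h | ⟨h | h, h'⟩ | ⟨h | h, h'⟩ | h | h | h | h <;> simp_all

lemma mem_cases (h : IsTypeI G p q A B B₁ B₂ s₁ s₂) (w : V) :
    w ∈ A ∨ w ∈ B ∨ w = s₁ ∨ w = s₂ := by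
  have := h.union_eq_univ ▸ Set.mem_univ w
  simp only [Set.mem_union, Set.mem_insert_iff, Set.mem_singleton_iff] at this
  tauto

lemma notMem_B_of_mem_A (h : IsTypeI G p q A B B₁ B₂ s₁ s₂) {x : V} (hx : x ∈ A) : x ∉ B :=
  h.disjoint_A_B.notMem_of_mem_left hx

lemma mem_B_of_mem_B₁ (h : IsTypeI G p q A B B₁ B₂ s₁ s₂) {x : V} (hx : x ∈ B₁) : x ∈ B :=
  h.union_B₁_B₂ ▸ Set.mem_union_left B₂ hx

lemma mem_B₁_or_mem_B₂ (h : IsTypeI G p q A B B₁ B₂ s₁ s₂) {x : V} (hx : x ∈ B) :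
    x ∈ B₁ ∨ x ∈ B₂ := by
  rwa [← h.union_B₁_B₂] at hx

lemma isClique_A (h : IsTypeI G p q A B B₁ B₂ s₁ s₂) : G.IsClique A :=
  fun x hx y hy hxy => by grind [h.adj_iff]

lemma isClique_B (h : IsTypeI G p q A B B₁ B₂ s₁ s₂) : G.IsClique B :=
  fun x hx y hy hxy => by grind [h.adj_iff]

lemma adj_s₁_of_mem_A (h : IsTypeI G p q A B B₁ B₂ s₁ s₂) {x : V} (hx : x ∈ A) :
    G.Adj s₁ x := by
  grind [h.adj_iff, h.s₁_notMem_A]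

lemma adj_s₁_of_mem_B₁ (h : IsTypeI G p q A B B₁ B₂ s₁ s₂) {x : V} (hx : x ∈ B₁) :
    G.Adj s₁ x := by
  grind [h.adj_iff, h.s₁_notMem_B, h.mem_B_of_mem_B₁]

lemma not_adj_of_mem_A_of_mem_B (h : IsTypeI G p q A B B₁ B₂ s₁ s₂) {x y : V} (hx : x ∈ A)
    (hy : y ∈ B) : ¬ G.Adj x y := by
  grind [h.adj_iff, h.notMem_B_of_mem_A, h.s₁_notMem_A, h.s₂_notMem_A, h.s₁_notMem_B,
    h.s₂_notMem_B]

lemma not_adj_s₁_s₂ (h : IsTypeI G p q A B B₁ B₂ s₁ s₂) : ¬ G.Adj s₁ s₂ := by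
  grind [h.adj_iff, h.s₁_notMem_A, h.s₂_notMem_A, h.s₁_notMem_B, h.s₂_notMem_B,
    h.mem_B_of_mem_B₁, h.symm.mem_B_of_mem_B₁]

lemma not_adj_s₁_of_mem_B₂ (h : IsTypeI G p q A B B₁ B₂ s₁ s₂) {x : V} (hx : x ∈ B₂) :
    ¬ G.Adj s₁ x := by
  grind [h.adj_iff, h.ne, h.s₁_notMem_A, h.s₁_notMem_B, h.notMem_B_of_mem_A,
    h.symm.mem_B_of_mem_B₁, h.disjoint_B₁_B₂.notMem_of_mem_left]

lemma adj_of_pairwise_ne (h : IsTypeI G p q A B B₁ B₂ s₁ s₂) {x y z : V} (hxy : x ≠ y)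
    (hxz : x ≠ z) (hyz : y ≠ z) : G.Adj x y ∨ G.Adj x z ∨ G.Adj y z := by
  grind [h.adj_iff, h.mem_cases, h.mem_B₁_or_mem_B₂]

lemma ncard_univ [Finite V] (h : IsTypeI G p q A B B₁ B₂ s₁ s₂) :
    (Set.univ : Set V).ncard = 2 * p + 2 * q + 3 := by
  have hs : Disjoint (A ∪ B) {s₁, s₂} := by
    simp [Set.disjoint_insert_right, h.s₁_notMem_A, h.s₂_notMem_A, h.s₁_notMem_B, h.s₂_notMem_B]
  rw [← h.union_eq_univ, Set.ncard_union_eq hs, Set.ncard_union_eq h.disjoint_A_B, h.ncard_A,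
    h.ncard_B, Set.ncard_pair h.ne]
  ring

lemma equimatchable [Finite V] (h : IsTypeI G p q A B B₁ B₂ s₁ s₂) : Equimatchable G := by
  refine equimatchable_of_odd_card ?_ fun x y z => h.adj_of_pairwise_ne
  rw [← Set.ncard_univ, h.ncard_univ]
  exact ⟨p + q + 1, by ring⟩

lemma exists_pair_mem_A [Finite V] (h : IsTypeI G p q A B B₁ B₂ s₁ s₂) :
    ∃ a a', a ∈ A ∧ a' ∈ A ∧ a ≠ a' :=
  (Set.one_lt_ncard_iff (Set.toFinite _)).mp (by rw [h.ncard_A]; have := h.one_le_q; omega)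

lemma exists_mem_A_ne (h : IsTypeI G p q A B B₁ B₂ s₁ s₂) (a : V) : ∃ c ∈ A, c ≠ a :=
  Set.exists_ne_of_one_lt_ncard (by rw [h.ncard_A]; have := h.one_le_q; omega) a

lemma exists_mem_B_ne_ne [Finite V] (h : IsTypeI G p q A B B₁ B₂ s₁ s₂) (x y : V) :
    ∃ c ∈ B, c ≠ x ∧ c ≠ y := by
  have hdiff := Set.le_ncard_sdiff {x, y} B
  have hpair := Set.ncard_insert_le x {y}
  rw [Set.ncard_singleton, h.ncard_B] at *
  obtain ⟨c, hcB, hc⟩ := (Set.ncard_pos (Set.toFinite _)).mp (by have := h.one_le_p; omega : 0 < (B \ {x, y}).ncard)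
  exact ⟨c, hcB, by simpa [not_or] using hc⟩

attribute [local grind →] IsTypeI.ne IsTypeI.s₁_notMem_A IsTypeI.s₂_notMem_A
  IsTypeI.s₁_notMem_B IsTypeI.s₂_notMem_B IsTypeI.notMem_B_of_mem_A IsTypeI.mem_B_of_mem_B₁

lemma exists_isMatching_sdiff_union_sdiff [Finite V] (h : IsTypeI G p q A B B₁ B₂ s₁ s₂)
    {H : SimpleGraph V} {X Y : Set V} (hXA : X ⊆ A) (hYB : Y ⊆ B) (hX : Even X.ncard)
    (hY : Odd Y.ncard) (hA : H.IsClique (A \ X)) (hB : H.IsClique (B \ Y)) :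
    ∃ M : H.Subgraph, M.verts = A \ X ∪ B \ Y ∧ M.IsMatching := by
  refine exists_isMatching_union_of_isClique
    (h.disjoint_A_B.mono Set.sdiff_subset Set.sdiff_subset) hA hB ?_ ?_
  · rw [Set.ncard_sdiff hXA]
    exact (Nat.even_sub (Set.ncard_le_ncard hXA)).mpr (by simp [hX, h.ncard_A])
  · rw [Set.ncard_sdiff hYB]
    exact (Nat.even_sub (Set.ncard_le_ncard hYB)).mpr
      (by simp [h.ncard_B, Nat.not_even_iff_odd, hY])

lemma exists_isMatching_of_two_pairs [Finite V] (h : IsTypeI G p q A B B₁ B₂ s₁ s₂)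
    {H : SimpleGraph V} {X Y U : Set V} {x₁ x₂ : V} (hXA : X ⊆ A) (hYB : Y ⊆ B)
    (hX : Even X.ncard) (hY : Odd Y.ncard) (hA : H.IsClique (A \ X)) (hB : H.IsClique (B \ Y))
    (hx₁ : x₁ ∈ X ∪ Y) (hx₂ : x₂ ∈ X ∪ Y) (hx : x₁ ≠ x₂) (h₁ : H.Adj s₁ x₁) (h₂ : H.Adj s₂ x₂)
    (hU : Uᶜ = insert s₁ (insert x₁ (insert s₂ (insert x₂ (A \ X ∪ B \ Y))))) :
    ∃ M : H.Subgraph, M.verts = Uᶜ ∧ M.IsMatching := by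
  rw [hU]
  exact exists_isMatching_insert_insert h₁ (by grind) (by grind) <|
    exists_isMatching_insert_insert h₂ (by grind) (by grind) <|
    h.exists_isMatching_sdiff_union_sdiff hXA hYB hX hY hA hB

lemma exists_isMatching_compl_singleton [Finite V] (h : IsTypeI G p q A B B₁ B₂ s₁ s₂)
    {H : SimpleGraph V} {x₁ x₂ b : V} (hx₁ : x₁ ∈ A) (hx₂ : x₂ ∈ A) (hx : x₁ ≠ x₂) (hb : b ∈ B)
    (h₁ : H.Adj s₁ x₁) (h₂ : H.Adj s₂ x₂) (hA : H.IsClique (A \ {x₁, x₂}))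
    (hB : H.IsClique (B \ {b})) : ∃ M : H.Subgraph, M.verts = {b}ᶜ ∧ M.IsMatching := by
  refine h.exists_isMatching_of_two_pairs (by grind) (by grind)
    (by rw [Set.ncard_pair hx]; decide) (by simp) hA hB (by simp) (by simp) hx h₁ h₂ ?_
  ext w
  simp only [Set.mem_compl_iff, Set.mem_singleton_iff, Set.mem_insert_iff, Set.mem_union,
    Set.mem_sdiff]
  grind [h.mem_cases w]

lemma not_equimatchable_deleteEdges_of_mem_A [Finite V] (h : IsTypeI G p q A B B₁ B₂ s₁ s₂)
    {u v : V} (hu : u ∈ A) (hv : v ∈ A) (huv : u ≠ v) :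
    ¬ Equimatchable (G.deleteEdges {s(u, v)}) := by
  obtain ⟨b₁, hb₁⟩ := h.B₁_nonempty
  obtain ⟨b₂, hb₂⟩ := h.B₂_nonempty
  obtain ⟨b₀, hb₀, hb₀₁, hb₀₂⟩ := h.exists_mem_B_ne_ne b₁ b₂
  have hb₂B := h.symm.mem_B_of_mem_B₁ hb₂
  have hb₁₂ : b₁ ≠ b₂ := h.disjoint_B₁_B₂.ne_of_mem hb₁ hb₂
  refine not_equimatchable_of_isMatching_compl (w := b₀) (x := u) (y := v) (z := b₀) huv
    (isIndepSet_triple.mpr ⟨by simp, ?_, ?_⟩) ?_ ?_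
  · exact fun h' => h.not_adj_of_mem_A_of_mem_B hu hb₀ (deleteEdges_le _ h')
  · exact fun h' => h.not_adj_of_mem_A_of_mem_B hv hb₀ (deleteEdges_le _ h')
  · exact h.exists_isMatching_compl_singleton hu hv huv hb₀
      (adj_deleteEdges (h.adj_s₁_of_mem_A hu) (by grind) (by grind))
      (adj_deleteEdges (h.symm.adj_s₁_of_mem_A hv) (by grind) (by grind))
      (isClique_deleteEdges (h.isClique_A.subset Set.sdiff_subset) (by simp))
      (isClique_deleteEdges (h.isClique_B.subset Set.sdiff_subset) (by grind))
  · refine h.exists_isMatching_of_two_pairs (X := {u, v}) (Y := {b₀, b₁, b₂}) (by grind)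
      (by grind) (by rw [Set.ncard_pair huv]; decide)
      (by rw [Set.ncard_eq_three.mpr ⟨_, _, _, hb₀₁, hb₀₂, hb₁₂, rfl⟩]; decide)
      (isClique_deleteEdges (h.isClique_A.subset Set.sdiff_subset) (by simp))
      (isClique_deleteEdges (h.isClique_B.subset Set.sdiff_subset) (by grind)) (by simp)
      (by simp) hb₁₂ (adj_deleteEdges (h.adj_s₁_of_mem_B₁ hb₁) (by grind) (by grind))
      (adj_deleteEdges (h.symm.adj_s₁_of_mem_B₁ hb₂) (by grind) (by grind)) ?_
    ext w
    simp only [Set.mem_compl_iff, Set.mem_singleton_iff, Set.mem_insert_iff, Set.mem_union,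
      Set.mem_sdiff]
    grind [h.mem_cases w]

lemma not_equimatchable_deleteEdges_of_mem_B_of_mem_B₁ [Finite V]
    (h : IsTypeI G p q A B B₁ B₂ s₁ s₂) {u v c : V} (hu : u ∈ B) (hv : v ∈ B) (huv : u ≠ v)
    (hc : c ∈ B₁) (hcu : c ≠ u) (hcv : c ≠ v) :
    ¬ Equimatchable (G.deleteEdges {s(u, v)}) := by
  obtain ⟨a, a', ha, ha', haa'⟩ := h.exists_pair_mem_A
  refine not_equimatchable_of_isMatching_compl (w := u) (x := a) (y := u) (z := v)
    (by grind) (isIndepSet_triple.mpr ⟨?_, ?_, by simp⟩) ?_ ?_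
  · exact fun h' => h.not_adj_of_mem_A_of_mem_B ha hu (deleteEdges_le _ h')
  · exact fun h' => h.not_adj_of_mem_A_of_mem_B ha hv (deleteEdges_le _ h')
  · exact h.exists_isMatching_compl_singleton ha ha' haa' hu
      (adj_deleteEdges (h.adj_s₁_of_mem_A ha) (by grind) (by grind))
      (adj_deleteEdges (h.symm.adj_s₁_of_mem_A ha') (by grind) (by grind))
      (isClique_deleteEdges (h.isClique_A.subset Set.sdiff_subset) (by grind))
      (isClique_deleteEdges (h.isClique_B.subset Set.sdiff_subset) (by simp))
  · refine h.exists_isMatching_of_two_pairs (X := {a, a'}) (Y := {u, v, c}) (by grind)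
      (by grind) (by rw [Set.ncard_pair haa']; decide)
      (by rw [Set.ncard_eq_three.mpr ⟨_, _, _, huv, hcu.symm, hcv.symm, rfl⟩]; decide)
      (isClique_deleteEdges (h.isClique_A.subset Set.sdiff_subset) (by grind))
      (isClique_deleteEdges (h.isClique_B.subset Set.sdiff_subset) (by simp)) (by simp)
      (by simp) (by grind) (adj_deleteEdges (h.adj_s₁_of_mem_B₁ hc) (by grind) (by grind))
      (adj_deleteEdges (h.symm.adj_s₁_of_mem_A ha') (by grind) (by grind)) ?_
    ext w
    simp only [Set.mem_compl_iff, Set.mem_singleton_iff, Set.mem_insert_iff, Set.mem_union,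
      Set.mem_sdiff]
    grind [h.mem_cases w]

lemma not_equimatchable_deleteEdges_of_mem_B [Finite V] (h : IsTypeI G p q A B B₁ B₂ s₁ s₂)
    {u v : V} (hu : u ∈ B) (hv : v ∈ B) (huv : u ≠ v) :
    ¬ Equimatchable (G.deleteEdges {s(u, v)}) := by
  obtain ⟨c, hc, hcu, hcv⟩ := h.exists_mem_B_ne_ne u v
  rcases h.mem_B₁_or_mem_B₂ hc with hc | hc
  · exact h.not_equimatchable_deleteEdges_of_mem_B_of_mem_B₁ hu hv huv hc hcu hcv
  · exact h.symm.not_equimatchable_deleteEdges_of_mem_B_of_mem_B₁ hu hv huv hc hcu hcv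

lemma not_equimatchable_deleteEdges_s₁_of_mem_A [Finite V] (h : IsTypeI G p q A B B₁ B₂ s₁ s₂)
    {a : V} (ha : a ∈ A) : ¬ Equimatchable (G.deleteEdges {s(s₁, a)}) := by
  obtain ⟨c, hc, hca⟩ := h.exists_mem_A_ne a
  obtain ⟨b, hb⟩ := h.B₂_nonempty
  have hbB := h.symm.mem_B_of_mem_B₁ hb
  refine not_equimatchable_of_isMatching_compl (w := b) (x := s₁) (y := a) (z := b)
    (by grind) (isIndepSet_triple.mpr ⟨by simp, ?_, ?_⟩) ?_ ?_
  · exact fun h' => h.not_adj_s₁_of_mem_B₂ hb (deleteEdges_le _ h')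
  · exact fun h' => h.not_adj_of_mem_A_of_mem_B ha hbB (deleteEdges_le _ h')
  · exact h.exists_isMatching_compl_singleton hc ha hca hbB
      (adj_deleteEdges (h.adj_s₁_of_mem_A hc).symm (by grind) (by grind)).symm
      (adj_deleteEdges (h.symm.adj_s₁_of_mem_A ha) (by grind) (by grind))
      (isClique_deleteEdges (h.isClique_A.subset Set.sdiff_subset) (by grind))
      (isClique_deleteEdges (h.isClique_B.subset Set.sdiff_subset) (by grind))
  · have h₂ : (G.deleteEdges {s(s₁, a)}).Adj s₂ c :=
      adj_deleteEdges (h.symm.adj_s₁_of_mem_A hc) (by grind) (by grind)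
    convert exists_isMatching_insert_insert h₂ (by grind) (by grind) <|
      h.exists_isMatching_sdiff_union_sdiff (X := {a, c}) (Y := {b}) (by grind) (by grind)
        (by rw [Set.ncard_pair hca.symm]; decide) (by simp)
        (isClique_deleteEdges (h.isClique_A.subset Set.sdiff_subset) (by grind))
        (isClique_deleteEdges (h.isClique_B.subset Set.sdiff_subset) (by grind)) using 4
    ext w
    simp only [Set.mem_compl_iff, Set.mem_singleton_iff, Set.mem_insert_iff, Set.mem_union,
      Set.mem_sdiff]
    grind [h.mem_cases w]

lemma not_equimatchable_deleteEdges_s₁_of_mem_B₁ [Finite V] (h : IsTypeI G p q A B B₁ B₂ s₁ s₂)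
    {b : V} (hb : b ∈ B₁) : ¬ Equimatchable (G.deleteEdges {s(s₁, b)}) := by
  obtain ⟨a, a', ha, ha', haa'⟩ := h.exists_pair_mem_A
  have hbB := h.mem_B_of_mem_B₁ hb
  refine not_equimatchable_of_isMatching_compl (w := b) (x := s₁) (y := s₂) (z := b)
    h.ne (isIndepSet_triple.mpr ⟨?_, by simp, ?_⟩) ?_ ?_
  · exact fun h' => h.not_adj_s₁_s₂ (deleteEdges_le _ h')
  · exact fun h' => h.symm.not_adj_s₁_of_mem_B₂ hb (deleteEdges_le _ h')
  · exact h.exists_isMatching_compl_singleton ha ha' haa' hbB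
      (adj_deleteEdges (h.adj_s₁_of_mem_A ha).symm (by grind) (by grind)).symm
      (adj_deleteEdges (h.symm.adj_s₁_of_mem_A ha') (by grind) (by grind))
      (isClique_deleteEdges (h.isClique_A.subset Set.sdiff_subset) (by grind))
      (isClique_deleteEdges (h.isClique_B.subset Set.sdiff_subset) (by grind))
  · convert h.exists_isMatching_sdiff_union_sdiff (H := G.deleteEdges {s(s₁, b)}) (X := ∅)
      (Y := {b}) (by simp) (by grind) (by simp) (by simp)
      (isClique_deleteEdges (h.isClique_A.subset Set.sdiff_subset) (by grind))
      (isClique_deleteEdges (h.isClique_B.subset Set.sdiff_subset) (by grind)) using 4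
    ext w
    simp only [Set.mem_compl_iff, Set.mem_singleton_iff, Set.mem_insert_iff, Set.mem_union,
      Set.mem_sdiff, Set.mem_empty_iff_false]
    grind [h.mem_cases w]

lemma not_equimatchable_deleteEdges [Finite V] (h : IsTypeI G p q A B B₁ B₂ s₁ s₂) {u v : V}
    (huv : G.Adj u v) : ¬ Equimatchable (G.deleteEdges {s(u, v)}) := by
  obtain ⟨huv, hu | hu | ⟨rfl | rfl, hv⟩ | ⟨rfl | rfl, hv⟩ | ⟨rfl, hv⟩ | ⟨rfl, hv⟩ | ⟨rfl, hv⟩ |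
    ⟨rfl, hv⟩⟩ := (h.adj_iff u v).mp huv
  · exact h.not_equimatchable_deleteEdges_of_mem_A hu.1 hu.2 huv
  · exact h.not_equimatchable_deleteEdges_of_mem_B hu.1 hu.2 huv
  · exact h.not_equimatchable_deleteEdges_s₁_of_mem_A hv
  · exact h.symm.not_equimatchable_deleteEdges_s₁_of_mem_A hv
  · exact Sym2.eq_swap ▸ h.not_equimatchable_deleteEdges_s₁_of_mem_A hv
  · exact Sym2.eq_swap ▸ h.symm.not_equimatchable_deleteEdges_s₁_of_mem_A hv
  · exact h.not_equimatchable_deleteEdges_s₁_of_mem_B₁ hv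
  · exact Sym2.eq_swap ▸ h.not_equimatchable_deleteEdges_s₁_of_mem_B₁ hv
  · exact h.symm.not_equimatchable_deleteEdges_s₁_of_mem_B₁ hv
  · exact Sym2.eq_swap ▸ h.symm.not_equimatchable_deleteEdges_s₁_of_mem_B₁ hv

theorem ece [Finite V] (h : IsTypeI G p q A B B₁ B₂ s₁ s₂) : ECE G :=
  ⟨h.equimatchable, fun _ _ => h.not_equimatchable_deleteEdges⟩

end IsTypeI

/-- Type I graphs are edge-critical equimatchable: vertex set `A ∪ B ∪ {s₁, s₂}` with
`|A| = 2q`, `|B| = 2p+1`, `B = B₁ ∪ B₂` a partition into nonempty parts, `A` and `B` cliques,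
`{s₁, s₂}` complete to `A`, `s₁` complete to `B₁`, `s₂` complete to `B₂`, and no other
edges. -/
theorem typeI_ece {V : Type*} [Fintype V] (p q : ℕ) (hp : 1 ≤ p) (hq : 1 ≤ q)
    (G : SimpleGraph V) (A B B₁ B₂ : Set V) (s₁ s₂ : V)
    (hs : s₁ ≠ s₂) (hs₁A : s₁ ∉ A) (hs₂A : s₂ ∉ A) (hs₁B : s₁ ∉ B) (hs₂B : s₂ ∉ B)
    (hABdisj : Disjoint A B)
    (hunion : A ∪ B ∪ {s₁, s₂} = Set.univ)
    (hAcard : A.ncard = 2 * q) (hBcard : B.ncard = 2 * p + 1)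
    (hB₁ne : B₁.Nonempty) (hB₂ne : B₂.Nonempty)
    (hBpart : B₁ ∪ B₂ = B) (hBdisj : Disjoint B₁ B₂)
    (hadj : ∀ x y : V, G.Adj x y ↔ x ≠ y ∧
      ((x ∈ A ∧ y ∈ A) ∨ (x ∈ B ∧ y ∈ B) ∨
        ((x = s₁ ∨ x = s₂) ∧ y ∈ A) ∨ ((y = s₁ ∨ y = s₂) ∧ x ∈ A) ∨
        (x = s₁ ∧ y ∈ B₁) ∨ (y = s₁ ∧ x ∈ B₁) ∨
        (x = s₂ ∧ y ∈ B₂) ∨ (y = s₂ ∧ x ∈ B₂))) :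
    ECE G :=
  IsTypeI.ece ⟨hp, hq, hs, hs₁A, hs₂A, hs₁B, hs₂B, hABdisj, hunion, hAcard, hBcard, hB₁ne, hB₂ne,
    hBpart, hBdisj, hadj⟩
end
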